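/- arXiv:2605.11479 — 5 statements merged into one kernel-verified Lean document; each statement's English description precedes it below -/
import Mathlib

section
/- Let S be a measurable space, κ a Markov kernel from S to S, and l : S → ℝ a bounded measurable function. For s ∈ S and n ∈ ℕ, let V_n(s) denote the expectation, under the law of the time-homogeneous Markov chain (X_0, X_1, …, X_n) with X_0 = s and transition kernel κ, of min_{0 ≤ k ≤ n} l(X_k). Then for every n ≥ 1 and every s ∈ S, V_n(s) ≤ ∫ min(l(s), V_{n-1}(s')) dκ(s)(s'). -/
open MeasureTheory ProbabilityTheory

/-- `expMinTraj κ l n c s` is the expectation, under the law of the time-homogeneous Markov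
chain `(X_0, X_1, …, X_n)` with `X_0 = s` and transition kernel `κ`, of
`min (c, min_{0 ≤ k ≤ n} l (X_k))`, expressed via the Markov property as nested integrals
(the running minimum `c` is threaded through the recursion). -/
noncomputable def expMinTraj {S : Type*} [MeasurableSpace S] (κ : Kernel S S)
    (l : S → ℝ) : ℕ → ℝ → S → ℝ
  | 0, c, s => min c (l s)
  | n + 1, c, s => ∫ s', expMinTraj κ l n (min c (l s)) s' ∂(κ s)

/-- `livenessValue κ l n s` is the expectation, under the law of the Markov chain
`(X_0, …, X_n)` started at `s` with transition kernel `κ`, of `min_{0 ≤ k ≤ n} l (X_k)`. -/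
noncomputable def livenessValue {S : Type*} [MeasurableSpace S] (κ : Kernel S S)
    (l : S → ℝ) (n : ℕ) (s : S) : ℝ :=
  expMinTraj κ l n (l s) s

lemma abs_min_le_max_abs (a b : ℝ) : |min a b| ≤ max |a| |b| := by
  rw [abs_le]
  refine ⟨le_min ?_ ?_, (min_le_left a b).trans ((le_abs_self a).trans (le_max_left _ _))⟩
  · exact (neg_le_neg (le_max_left |a| |b|)).trans (neg_abs_le a)
  · exact (neg_le_neg (le_max_right |a| |b|)).trans (neg_abs_le b)

section aux
variable {S : Type*} [MeasurableSpace S] (κ : Kernel S S) [IsMarkovKernel κ]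
  (l : S → ℝ) (hl : Measurable l)
include hl


lemma expMinTraj_meas : ∀ n : ℕ,
    StronglyMeasurable (fun p : ℝ × S => expMinTraj κ l n p.1 p.2) := by
  intro n
  induction n with
  | zero =>
    exact (measurable_fst.min (hl.comp measurable_snd)).stronglyMeasurable
  | succ n ih =>
    have : (fun p : ℝ × S => expMinTraj κ l (n+1) p.1 p.2) =
        fun p : ℝ × S => ∫ s', (fun q : (ℝ × S) × S =>
          expMinTraj κ l n (min q.1.1 (l q.1.2)) q.2) (p, s')
          ∂((Kernel.comap κ Prod.snd measurable_snd : Kernel (ℝ × S) S) p) := by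
      rfl
    rw [this]
    have hm : Measurable (fun q : (ℝ × S) × S =>
        ((min q.1.1 (l q.1.2), q.2) : ℝ × S)) :=
      ((measurable_fst.fst.min (hl.comp measurable_fst.snd)).prodMk measurable_snd)
    exact StronglyMeasurable.integral_kernel_prod_right'
      (κ := (Kernel.comap κ Prod.snd measurable_snd : Kernel (ℝ × S) S))
      (ih.comp_measurable hm)

omit hl in
lemma expMinTraj_abs_le {C : ℝ} (hC : ∀ s, |l s| ≤ C) :
    ∀ (n : ℕ) (c : ℝ) (s : S), |expMinTraj κ l n c s| ≤ max |c| C := by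
  intro n
  induction n with
  | zero =>
    intro c s
    exact (abs_min_le_max_abs c (l s)).trans (max_le_max le_rfl (hC s))
  | succ n ih =>
    intro c s
    have h1 : |∫ s', expMinTraj κ l n (min c (l s)) s' ∂(κ s)| ≤ max |min c (l s)| C := by
      rw [← Real.norm_eq_abs]
      have := norm_integral_le_of_norm_le_const (μ := κ s)
        (f := fun s' => expMinTraj κ l n (min c (l s)) s') (C := max |min c (l s)| C)
        (Filter.Eventually.of_forall fun s' => by
          rw [Real.norm_eq_abs]; exact ih (min c (l s)) s')
      simpa using this
    refine h1.trans (max_le ?_ (le_max_right _ _))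
    exact ((abs_min_le_max_abs c (l s)).trans (max_le_max le_rfl (hC s))).trans
      (max_le (le_max_left _ _) (le_max_right _ _))

lemma expMinTraj_integrable {C : ℝ} (hC : ∀ s, |l s| ≤ C) (n : ℕ) (c : ℝ) (s : S) :
    Integrable (fun s' => expMinTraj κ l n c s') (κ s) := by
  refine (integrable_const (max |c| C)).mono' ?_ ?_
  · exact ((expMinTraj_meas κ l hl n).comp_measurable
      (measurable_const.prodMk measurable_id)).aestronglyMeasurable
  · exact Filter.Eventually.of_forall fun s' => by
      simpa [Real.norm_eq_abs] using expMinTraj_abs_le κ l hC n c s'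

lemma expMinTraj_mono {C : ℝ} (hC : ∀ s, |l s| ≤ C) :
    ∀ (n : ℕ) {c c' : ℝ}, c ≤ c' → ∀ s : S, expMinTraj κ l n c s ≤ expMinTraj κ l n c' s := by
  intro n
  induction n with
  | zero => intro c c' h s; exact min_le_min h le_rfl
  | succ n ih =>
    intro c c' h s
    exact integral_mono (expMinTraj_integrable κ l hl hC n _ s)
      (expMinTraj_integrable κ l hl hC n _ s)
      (fun s' => ih (min_le_min h le_rfl) s')

lemma expMinTraj_le_const {C : ℝ} (hC : ∀ s, |l s| ≤ C) :
    ∀ (n : ℕ) (c : ℝ) (s : S), expMinTraj κ l n c s ≤ c := by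
  intro n
  induction n with
  | zero => intro c s; exact min_le_left _ _
  | succ n ih =>
    intro c s
    calc ∫ s', expMinTraj κ l n (min c (l s)) s' ∂(κ s)
        ≤ ∫ _, min c (l s) ∂(κ s) :=
          integral_mono (expMinTraj_integrable κ l hl hC n _ s) (integrable_const _)
            (fun s' => ih _ s')
      _ = min c (l s) := by simp
      _ ≤ c := min_le_left _ _

omit [IsMarkovKernel κ] hl in
lemma expMinTraj_max (n : ℕ) (c : ℝ) (s : S) :
    expMinTraj κ l n (max c (l s)) s = expMinTraj κ l n (l s) s := by
  cases n with
  | zero => simp [expMinTraj, min_eq_right (le_max_right c (l s))]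
  | succ n => simp [expMinTraj, min_eq_right (le_max_right c (l s))]

lemma expMinTraj_le_start {C : ℝ} (hC : ∀ s, |l s| ≤ C) (n : ℕ) (c : ℝ) (s : S) :
    expMinTraj κ l n c s ≤ expMinTraj κ l n (l s) s := by
  calc expMinTraj κ l n c s ≤ expMinTraj κ l n (max c (l s)) s :=
        expMinTraj_mono κ l hl hC n (le_max_left _ _) s
    _ = expMinTraj κ l n (l s) s := expMinTraj_max κ l n c s

end aux

/-- Proposition 1 (inequality part): the liveness value function
`V_n(s) = E[min_{0 ≤ k ≤ n} l(X_k)]` of a Markov chain with Markov kernel `κ`, bounded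
measurable target function `l`, satisfies the one-sided Bellman inequality
`V_n(s) ≤ ∫ min (l s) (V_{n-1} s') ∂(κ s)` for all `n ≥ 1`. -/
theorem livenessValue_le_integral_min {S : Type*} [MeasurableSpace S] (κ : Kernel S S)
    [IsMarkovKernel κ] (l : S → ℝ) (hl_meas : Measurable l) (hl_bdd : ∃ C, ∀ s, |l s| ≤ C)
    (n : ℕ) (hn : 1 ≤ n) (s : S) :
    livenessValue κ l n s ≤ ∫ s', min (l s) (livenessValue κ l (n - 1) s') ∂(κ s) := by
  obtain ⟨C, hC⟩ := hl_bdd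
  obtain ⟨m, rfl⟩ : ∃ m, n = m + 1 := ⟨n - 1, (Nat.succ_pred_eq_of_pos hn).symm⟩
  simp only [Nat.add_sub_cancel, livenessValue]
  have h1 : expMinTraj κ l (m + 1) (l s) s = ∫ s', expMinTraj κ l m (l s) s' ∂(κ s) := by
    simp [expMinTraj, min_self]
  rw [h1]
  refine integral_mono (expMinTraj_integrable κ l hl_meas hC m (l s) s) ?_ fun s' => ?_
  · refine (integrable_const (max |l s| C)).mono' ?_ (Filter.Eventually.of_forall fun s' => ?_)
    · exact (measurable_const.min
        (((expMinTraj_meas κ l hl_meas m).measurable).comp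
          (hl_meas.prodMk measurable_id))).aestronglyMeasurable
    · rw [Real.norm_eq_abs]
      refine (abs_min_le_max_abs _ _).trans (max_le_max le_rfl ?_)
      exact (expMinTraj_abs_le κ l hC m (l s') s').trans (max_le (hC s') le_rfl)
  · exact le_min (expMinTraj_le_const κ l hl_meas hC m (l s) s')
      (expMinTraj_le_start κ l hl_meas hC m (l s) s')
end

section
/- Let (Ω, μ) be a probability space, m a sub-σ-algebra of the ambient σ-algebra on Ω, Y : Ω → ℝ an integrable random variable, and c : ℝ a constant. Then 0 ≤ ∫ min(c, (μ[Y | m])(ω)) dμ(ω) − ∫ min(c, Y(ω)) dμ(ω) ≤ ∫ |Y(ω) − (μ[Y | m])(ω)| dμ(ω). -/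
open MeasureTheory

/-- Quantified Jensen gap in Proposition 1: for a probability measure `μ`, a sub-σ-algebra
`m`, an integrable random variable `Y` and a constant `c`, the conservative fixed-point
approximation overestimates the true value by at most the mean absolute conditional
deviation of `Y`:
`0 ≤ ∫ min c (μ[Y|m]) ∂μ − ∫ min c Y ∂μ ≤ ∫ |Y − μ[Y|m]| ∂μ`. -/
theorem jensen_gap_min_condexp
    {Ω : Type*} {m m0 : MeasurableSpace Ω} (hm : m ≤ m0)
    (μ : Measure Ω) [IsProbabilityMeasure μ]
    (Y : Ω → ℝ) (hY : Integrable Y μ) (c : ℝ) :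
    0 ≤ (∫ ω, min c ((μ[Y|m]) ω) ∂μ) - ∫ ω, min c (Y ω) ∂μ ∧
    (∫ ω, min c ((μ[Y|m]) ω) ∂μ) - (∫ ω, min c (Y ω) ∂μ) ≤
      ∫ ω, |Y ω - (μ[Y|m]) ω| ∂μ := by
  have hf : Integrable (μ[Y|m]) μ := integrable_condExp
  have hminY : Integrable (fun ω => min c (Y ω)) μ :=
    (integrable_const c).inf hY
  have hminf : Integrable (fun ω => min c ((μ[Y|m]) ω)) μ :=
    (integrable_const c).inf hf
  constructor
  · -- lower bound
    have h1 : (fun ω => min c (Y ω)) ≤ᵐ[μ] Y :=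
      Filter.Eventually.of_forall fun ω => min_le_right _ _
    have h2 : (fun ω => min c (Y ω)) ≤ᵐ[μ] fun _ => c :=
      Filter.Eventually.of_forall fun ω => min_le_left _ _
    have hc1 : μ[fun ω => min c (Y ω)|m] ≤ᵐ[μ] μ[Y|m] :=
      condExp_mono hminY hY h1
    have hc2 : μ[fun ω => min c (Y ω)|m] ≤ᵐ[μ] μ[(fun _ => c)|m] :=
      condExp_mono hminY (integrable_const c) h2
    have hcc : μ[(fun _ : Ω => c)|m] =ᵐ[μ] fun _ => c :=
      Filter.EventuallyEq.of_eq (condExp_const hm c)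
    have hle : μ[fun ω => min c (Y ω)|m] ≤ᵐ[μ] fun ω => min c ((μ[Y|m]) ω) := by
      filter_upwards [hc1, hc2, hcc] with ω h1' h2' h3'
      exact le_min (h2'.trans_eq h3') h1'
    have := integral_mono_ae integrable_condExp hminf hle
    rw [integral_condExp hm] at this
    linarith
  · -- upper bound
    rw [← integral_sub hminf hminY]
    refine integral_mono (hminf.sub hminY) (hY.sub hf).abs fun ω => ?_
    simp only [Pi.sub_apply]
    rw [abs_sub_comm]
    have h := abs_min_sub_min_le_max c ((μ[Y|m]) ω) c (Y ω)
    simp only [sub_self, abs_zero] at h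
    exact (le_abs_self _).trans (h.trans (sup_le (abs_nonneg _) le_rfl))
end

section
/- Let (Ω, μ) be a probability space, Y : Ω → ℝ a square-integrable random variable, and c : ℝ a constant. Then 0 ≤ min(c, E[Y]) − E[min(c, Y)] ≤ sqrt(Var(Y)), where E denotes expectation with respect to μ and Var(Y) = E[(Y − E[Y])²]. -/
open MeasureTheory

/-- Unconditional Jensen-gap bound from Proposition 1: for a probability measure `μ`, a
square-integrable random variable `Y` and a constant `c`,
`0 ≤ min c (E[Y]) − E[min c Y] ≤ sqrt (Var Y)` where `Var Y = E[(Y − E[Y])²]`. -/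
theorem jensen_gap_min_le_stddev
    {Ω : Type*} [MeasurableSpace Ω] (μ : Measure Ω) [IsProbabilityMeasure μ]
    (Y : Ω → ℝ) (hY : MemLp Y 2 μ) (c : ℝ) :
    0 ≤ min c (∫ ω, Y ω ∂μ) - ∫ ω, min c (Y ω) ∂μ ∧
    min c (∫ ω, Y ω ∂μ) - (∫ ω, min c (Y ω) ∂μ) ≤
      Real.sqrt (∫ ω, (Y ω - ∫ ω', Y ω' ∂μ) ^ 2 ∂μ) := by
  have hYint : Integrable Y μ := hY.integrable (by norm_num)
  set m : ℝ := ∫ ω, Y ω ∂μ with hm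
  -- integrability of min c Y
  have hmin_meas : AEStronglyMeasurable (fun ω => min c (Y ω)) μ :=
    aestronglyMeasurable_const.inf hY.aestronglyMeasurable
  have hmin_int : Integrable (fun ω => min c (Y ω)) μ := by
    refine Integrable.mono' ((integrable_const |c|).add hYint.abs) hmin_meas ?_
    filter_upwards with ω
    simp only [Pi.add_apply, Real.norm_eq_abs]
    rcases min_cases c (Y ω) with ⟨h, _⟩ | ⟨h, _⟩ <;> rw [h]
    · nlinarith [abs_nonneg (Y ω)]
    · nlinarith [abs_nonneg c, abs_nonneg (Y ω), le_abs_self (Y ω), neg_abs_le (Y ω)]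
  -- Z := Y - m ∈ L²
  have hZ : MemLp (fun ω => Y ω - m) 2 μ := hY.sub (memLp_const m)
  have hZint : Integrable (fun ω => Y ω - m) μ := hZ.integrable (by norm_num)
  have hZsq : Integrable (fun ω => (Y ω - m) ^ 2) μ := by
    simpa using hZ.integrable_sq
  have hZabs : MemLp (fun ω => |Y ω - m|) 2 μ := hZ.abs
  constructor
  · -- E[min c Y] ≤ min c (E Y)
    have h1 : ∫ ω, min c (Y ω) ∂μ ≤ c := by
      calc ∫ ω, min c (Y ω) ∂μ ≤ ∫ _, c ∂μ :=
            integral_mono hmin_int (integrable_const c) fun ω => min_le_left _ _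
        _ = c := by simp
    have h2 : ∫ ω, min c (Y ω) ∂μ ≤ m :=
      integral_mono hmin_int hYint fun ω => min_le_right _ _
    have := le_min h1 h2
    linarith
  · -- gap ≤ E|Y - m| ≤ sqrt E[(Y-m)²]
    have habsint : Integrable (fun ω => |Y ω - m|) μ := hZint.abs
    have step1 : min c m - ∫ ω, min c (Y ω) ∂μ ≤ ∫ ω, |Y ω - m| ∂μ := by
      have : ∫ ω, (min c m - min c (Y ω)) ∂μ ≤ ∫ ω, |Y ω - m| ∂μ := by
        refine integral_mono ((integrable_const (min c m)).sub hmin_int) habsint fun ω => ?_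
        have h := abs_min_sub_min_le_max (a := c) (b := m) (c := c) (d := Y ω)
        simp only [sub_self, abs_zero] at h
        have h2 : |min c m - min c (Y ω)| ≤ |m - Y ω| := le_trans h (by simp)
        calc min c m - min c (Y ω) ≤ |min c m - min c (Y ω)| := le_abs_self _
          _ ≤ |m - Y ω| := h2
          _ = |Y ω - m| := abs_sub_comm _ _
      rwa [integral_sub (integrable_const _) hmin_int, integral_const, probReal_univ,
        smul_eq_mul, one_mul] at this
    have step2 : ∫ ω, |Y ω - m| ∂μ ≤ Real.sqrt (∫ ω, (Y ω - m) ^ 2 ∂μ) := by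
      have hpq : Real.HolderConjugate 2 2 := by
        constructor <;> norm_num
      have hone : MemLp (fun _ : Ω => (1 : ℝ)) (ENNReal.ofReal 2) μ := by
        simpa using (memLp_const (1 : ℝ) (μ := μ) (p := ENNReal.ofReal 2))
      have h := integral_mul_le_Lp_mul_Lq_of_nonneg (μ := μ) hpq
        (f := fun ω => |Y ω - m|) (g := fun _ => (1 : ℝ))
        (Filter.Eventually.of_forall fun ω => abs_nonneg _)
        (Filter.Eventually.of_forall fun _ => zero_le_one)
        (by simpa using hZabs) hone
      simp only [mul_one, Real.one_rpow, integral_const, measure_univ, probReal_univ, ENNReal.toReal_one,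
        smul_eq_mul, one_mul] at h
      have heq : ∫ ω, |Y ω - m| ^ (2 : ℝ) ∂μ = ∫ ω, (Y ω - m) ^ 2 ∂μ := by
        refine integral_congr_ae (Filter.Eventually.of_forall fun ω => ?_)
        show |Y ω - m| ^ (2:ℝ) = (Y ω - m) ^ 2
        rw [show |Y ω - m| ^ (2:ℝ) = |Y ω - m| ^ (2:ℕ) by
          rw [show ((2:ℝ)) = ((2:ℕ):ℝ) by norm_num, Real.rpow_natCast], sq_abs]
      rw [heq] at h
      calc ∫ ω, |Y ω - m| ∂μ ≤ (∫ ω, (Y ω - m) ^ 2 ∂μ) ^ ((1:ℝ)/2) := h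
        _ = Real.sqrt (∫ ω, (Y ω - m) ^ 2 ∂μ) := (Real.sqrt_eq_rpow _).symm
    calc min c m - ∫ ω, min c (Y ω) ∂μ ≤ ∫ ω, |Y ω - m| ∂μ := step1
      _ ≤ Real.sqrt (∫ ω, (Y ω - m) ^ 2 ∂μ) := step2
end

section
/- Let S be a nonempty type, succ : S → S a successor map, l : S → ℝ a bounded function, and γ ∈ (0,1). Then there exists a unique bounded function V : S → ℝ satisfying the fixed-point equation V(s) = (1 − γ) + γ · min(l(s), V(succ(s))) for every s ∈ S. -/
open scoped BoundedContinuousFunction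


/-- Consequence of Proposition 2: since the discounted liveness Bellman operator
`B V s = (1 − γ) + γ * min (l s) (V (succ s))` is a `γ`-contraction on the complete metric
space of bounded functions, it admits a unique bounded fixed point: there exists a unique
bounded function `V : S → ℝ` with `V s = (1 - γ) + γ * min (l s) (V (succ s))` for all `s`. -/
theorem bellman_unique_bounded_fixed_point
    {S : Type*} [Nonempty S] (succ : S → S) (l : S → ℝ) (hl : ∃ C, ∀ s, |l s| ≤ C)
    (γ : ℝ) (hγ : γ ∈ Set.Ioo (0 : ℝ) 1) :
    ∃! V : S → ℝ, (∃ C, ∀ s, |V s| ≤ C) ∧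
      ∀ s, V s = (1 - γ) + γ * min (l s) (V (succ s)) := by
  obtain ⟨hγ0, hγ1⟩ := hγ
  letI : TopologicalSpace S := ⊥
  haveI : DiscreteTopology S := ⟨rfl⟩
  obtain ⟨Cl, hCl⟩ := hl
  -- the Bellman operator on bounded functions
  set Bfun : (S →ᵇ ℝ) → S → ℝ :=
    fun f s => (1 - γ) + γ * min (l s) (f (succ s)) with hBfun
  have hbd : ∀ f : S →ᵇ ℝ, ∀ s, ‖Bfun f s‖ ≤ |1 - γ| + γ * (max Cl ‖f‖) := by
    intro f s
    have h1 : |min (l s) (f (succ s))| ≤ max Cl ‖f‖ := by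
      have hls := hCl s
      have hfs : |f (succ s)| ≤ ‖f‖ := f.norm_coe_le_norm (succ s)
      rcases le_total (l s) (f (succ s)) with h | h
      · rw [min_eq_left h]
        exact le_trans hls (le_max_left _ _)
      · rw [min_eq_right h]
        exact le_trans hfs (le_max_right _ _)
    calc ‖Bfun f s‖ ≤ |1 - γ| + |γ * min (l s) (f (succ s))| := abs_add_le _ _
      _ ≤ |1 - γ| + γ * (max Cl ‖f‖) := by
          rw [abs_mul, abs_of_pos hγ0]
          exact add_le_add le_rfl (mul_le_mul_of_nonneg_left h1 hγ0.le)
  set B : (S →ᵇ ℝ) → (S →ᵇ ℝ) :=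
    fun f => BoundedContinuousFunction.ofNormedAddCommGroup (Bfun f)
      continuous_of_discreteTopology (|1 - γ| + γ * (max Cl ‖f‖)) (hbd f) with hB
  have hBapp : ∀ (f : S →ᵇ ℝ) (s : S), B f s = (1 - γ) + γ * min (l s) (f (succ s)) := by
    intro f s; rfl
  set K : NNReal := ⟨γ, hγ0.le⟩ with hK
  have hlip : LipschitzWith K B := by
    refine LipschitzWith.of_dist_le_mul fun f g => ?_
    rw [BoundedContinuousFunction.dist_le (by positivity)]
    intro s
    rw [Real.dist_eq]
    have : |B f s - B g s| = γ * |min (l s) (f (succ s)) - min (l s) (g (succ s))| := by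
      rw [hBapp, hBapp]
      rw [show (1 - γ) + γ * min (l s) (f (succ s)) - ((1 - γ) + γ * min (l s) (g (succ s)))
        = γ * (min (l s) (f (succ s)) - min (l s) (g (succ s))) by ring]
      rw [abs_mul, abs_of_pos hγ0]
    rw [this]
    have h2 : |min (l s) (f (succ s)) - min (l s) (g (succ s))| ≤ |f (succ s) - g (succ s)| := by
      have := abs_min_sub_min_le_max (l s) (f (succ s)) (l s) (g (succ s))
      simpa using this
    have h3 : |f (succ s) - g (succ s)| ≤ dist f g := by
      rw [← Real.dist_eq]
      exact BoundedContinuousFunction.dist_coe_le_dist (succ s)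
    calc γ * |min (l s) (f (succ s)) - min (l s) (g (succ s))|
        ≤ γ * |f (succ s) - g (succ s)| := mul_le_mul_of_nonneg_left h2 hγ0.le
      _ ≤ γ * dist f g := mul_le_mul_of_nonneg_left h3 hγ0.le
      _ = (K : ℝ) * dist f g := rfl
  have hcontr : ContractingWith K B := ⟨by exact_mod_cast hγ1, hlip⟩
  set V₀ : S →ᵇ ℝ := hcontr.fixedPoint B with hV₀
  have hfix : B V₀ = V₀ := hcontr.fixedPoint_isFixedPt
  refine ⟨V₀, ⟨⟨‖V₀‖, fun s => V₀.norm_coe_le_norm s⟩, fun s => ?_⟩, ?_⟩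
  · conv_lhs => rw [← hfix]
    exact hBapp V₀ s
  · rintro W ⟨⟨Cw, hCw⟩, hWfix⟩
    set Wb : S →ᵇ ℝ := BoundedContinuousFunction.ofNormedAddCommGroup W
      continuous_of_discreteTopology Cw hCw with hWb
    have hWbfix : Function.IsFixedPt B Wb := by
      apply BoundedContinuousFunction.ext
      intro s
      rw [hBapp]
      exact (hWfix s).symm
    have : Wb = V₀ := hcontr.fixedPoint_unique hWbfix
    ext s
    have := congrArg (fun f : S →ᵇ ℝ => f s) this
    exact this
end

section
/- Let γ ∈ (0,1), N ∈ ℕ, and w : ℕ → ℝ a function with w(i) ≤ 1 for all i. Define v : ℕ → ℝ backward by v(N) = 1 and v(i) = (1 − γ) + γ · min(w(i), v(i+1)) for all i < N. Then: (a) v(i) ≤ 1 for all i ≤ N; and (b) for every i ≤ N, if there exists j with i ≤ j < N and w(j) < 1, then v(i) < 1. -/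
/-- Bootstrapping mechanism along a timed-out episode: with discount `γ ∈ (0,1)`,
bootstrapped targets `w i ≤ 1`, terminal value `v N = 1`, and the backward discounted
liveness recursion `v i = (1 − γ) + γ * min (w i) (v (i+1))` for `i < N`, we have
(a) `v i ≤ 1` for all `i ≤ N`, and (b) if some `j` with `i ≤ j < N` has corrected target
`w j < 1`, then `v i < 1`: a single optimistic target propagates backward through the
`min` operator. -/
theorem bootstrap_backward_propagation
    (γ : ℝ) (hγ : γ ∈ Set.Ioo (0 : ℝ) 1) (N : ℕ) (w : ℕ → ℝ) (hw : ∀ i, w i ≤ 1)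
    (v : ℕ → ℝ) (hvN : v N = 1)
    (hv : ∀ i, i < N → v i = (1 - γ) + γ * min (w i) (v (i + 1))) :
    (∀ i, i ≤ N → v i ≤ 1) ∧
    (∀ i, i ≤ N → (∃ j, i ≤ j ∧ j < N ∧ w j < 1) → v i < 1) := by
  obtain ⟨hγ0, hγ1⟩ := hγ
  have hA : ∀ d i, i + d = N → v i ≤ 1 := by
    intro d
    induction d with
    | zero => intro i hi; simp only [Nat.add_zero] at hi; simp [hi, hvN]
    | succ d ih =>
      intro i hi
      have hiN : i < N := by omega
      have h1 : v (i + 1) ≤ 1 := ih (i + 1) (by omega)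
      rw [hv i hiN]
      have hm : min (w i) (v (i + 1)) ≤ 1 := le_trans (min_le_right _ _) h1
      nlinarith
  have hA' : ∀ i, i ≤ N → v i ≤ 1 := fun i hi => hA (N - i) i (by omega)
  refine ⟨hA', ?_⟩
  have hB : ∀ d i, i + d < N → w (i + d) < 1 → v i < 1 := by
    intro d
    induction d with
    | zero =>
      intro i hi hwlt
      simp only [Nat.add_zero] at hi hwlt
      rw [hv i hi]
      have hm : min (w i) (v (i + 1)) ≤ w i := min_le_left _ _
      nlinarith
    | succ d ih =>
      intro i hi hwlt
      have h1 : v (i + 1) < 1 := by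
        have := ih (i + 1) (by omega) (by
          have : i + 1 + d = i + (d + 1) := by omega
          rw [this]; exact hwlt)
        exact this
      have hiN : i < N := by omega
      rw [hv i hiN]
      have hm : min (w i) (v (i + 1)) ≤ v (i + 1) := min_le_right _ _
      nlinarith
  intro i _ ⟨j, hij, hjN, hwj⟩
  have := hB (j - i) i (by omega) (by
    have : i + (j - i) = j := by omega
    rw [this]; exact hwj)
  exact this
end
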